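/- Let α(y) = 1/√(1-y²) on the open unit disk Ω. Then the vector field B₄(x,y) = (2x√(1-y²), -2y√(1-y²), -2xy) satisfies curl B₄ + α B₄ = 0 on Ω. -/

import Mathlib

noncomputable def pdx (f : ℝ × ℝ → ℝ) (p : ℝ × ℝ) : ℝ := fderiv ℝ f p (1, 0)
noncomputable def pdy (f : ℝ × ℝ → ℝ) (p : ℝ × ℝ) : ℝ := fderiv ℝ f p (0, 1)

/-- the open unit disk in the (x,y)-plane -/
def unitDisk : Set (ℝ × ℝ) := {p : ℝ × ℝ | p.1 ^ 2 + p.2 ^ 2 < 1}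

/-!
Each of the three components of `B₄` is a product `g x * h y` of a function of `x` and a
function of `y`, so its partial derivatives are one-variable derivatives. With
`s = √(1 - y²)` and `s' = -y / s`, the three equations reduce to the identities
`-2x + 2x = 0`, `2y - 2y = 0` and `2xy / s - 2xy / s = 0`.
-/

section Separated

variable {g h : ℝ → ℝ} {g' h' : ℝ} {p : ℝ × ℝ}

theorem hasFDerivAt_mul_separated (hg : HasDerivAt g g' p.1) (hh : HasDerivAt h h' p.2) :
    HasFDerivAt (fun q : ℝ × ℝ => g q.1 * h q.2)
      ((g' * h p.2) • ContinuousLinearMap.fst ℝ ℝ ℝ +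
        (g p.1 * h') • ContinuousLinearMap.snd ℝ ℝ ℝ) p := by
  have hx := hg.comp_hasFDerivAt p (hasFDerivAt_fst (𝕜 := ℝ) (F := ℝ))
  have hy := hh.comp_hasFDerivAt p (hasFDerivAt_snd (𝕜 := ℝ) (E := ℝ))
  refine (hx.mul hy).congr_fderiv ?_
  ext <;> simp; ring

theorem pdx_mul_separated (hg : HasDerivAt g g' p.1) (hh : HasDerivAt h h' p.2) :
    pdx (fun q : ℝ × ℝ => g q.1 * h q.2) p = g' * h p.2 := by
  simp [pdx, (hasFDerivAt_mul_separated hg hh).fderiv]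

theorem pdy_mul_separated (hg : HasDerivAt g g' p.1) (hh : HasDerivAt h h' p.2) :
    pdy (fun q : ℝ × ℝ => g q.1 * h q.2) p = g p.1 * h' := by
  simp [pdy, (hasFDerivAt_mul_separated hg hh).fderiv]

theorem pdx_comp_snd (hh : HasDerivAt h h' p.2) : pdx (fun q : ℝ × ℝ => h q.2) p = 0 := by
  have hd : HasFDerivAt (fun q : ℝ × ℝ => h q.2) (h' • ContinuousLinearMap.snd ℝ ℝ ℝ) p :=
    hh.comp_hasFDerivAt p hasFDerivAt_snd
  simp [pdx, hd.fderiv]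

end Separated

theorem hasDerivAt_sqrt_one_sub_sq {y : ℝ} (hy : 0 < 1 - y ^ 2) :
    HasDerivAt (fun y : ℝ => Real.sqrt (1 - y ^ 2)) (-y / Real.sqrt (1 - y ^ 2)) y := by
  have h := ((hasDerivAt_pow 2 y).const_sub 1).sqrt hy.ne'
  convert h using 1
  field_simp
  ring

theorem one_sub_snd_sq_pos_of_mem_unitDisk {p : ℝ × ℝ} (hp : p ∈ unitDisk) :
    0 < 1 - p.2 ^ 2 := by
  have : p.1 ^ 2 + p.2 ^ 2 < 1 := hp
  nlinarith [sq_nonneg p.1]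

theorem stmt9 (α B₁ B₂ B₃ : ℝ × ℝ → ℝ)
    (hα : ∀ p : ℝ × ℝ, α p = 1 / Real.sqrt (1 - p.2 ^ 2))
    (hB₁ : ∀ p : ℝ × ℝ, B₁ p = 2 * p.1 * Real.sqrt (1 - p.2 ^ 2))
    (hB₂ : ∀ p : ℝ × ℝ, B₂ p = -2 * p.2 * Real.sqrt (1 - p.2 ^ 2))
    (hB₃ : ∀ p : ℝ × ℝ, B₃ p = -2 * p.1 * p.2) :
    ∀ p ∈ unitDisk,
      pdy B₃ p + α p * B₁ p = 0 ∧
      -pdx B₃ p + α p * B₂ p = 0 ∧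
      pdx B₂ p - pdy B₁ p + α p * B₃ p = 0 := by
  obtain rfl : B₁ = _ := funext hB₁
  obtain rfl : B₂ = _ := funext hB₂
  obtain rfl : B₃ = _ := funext hB₃
  intro p hp
  have hpos := one_sub_snd_sq_pos_of_mem_unitDisk hp
  have hs := hasDerivAt_sqrt_one_sub_sq hpos
  have pdx₃ := pdx_mul_separated (hasDerivAt_const_mul (-2)) (hasDerivAt_id' p.2)
  have pdy₃ := pdy_mul_separated (hasDerivAt_const_mul (-2)) (hasDerivAt_id' p.2)
  have pdy₁ := pdy_mul_separated (hasDerivAt_const_mul 2) hs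
  have pdx₂ : pdx (fun q => -2 * q.2 * √(1 - q.2 ^ 2)) p = 0 :=
    pdx_comp_snd ((hasDerivAt_const_mul (-2)).mul hs)
  rw [pdx₃, pdy₃, pdy₁, pdx₂]
  have hsne : Real.sqrt (1 - p.2 ^ 2) ≠ 0 := (Real.sqrt_pos.2 hpos).ne'
  simp only [hα]
  refine ⟨?_, ?_, ?_⟩ <;> field_simp <;> ring
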